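/- If G is a König-Egerváry graph and Γ ⊆ Ω(G) is nonempty, then corona(G[⋃Γ]) = ⋃Γ and core(G[⋃Γ]) = ⋂Γ. -/
import Mathlib


open Set

variable {V : Type*}

/-- `S` is an independent set of `G`. -/
def IndepSet (G : SimpleGraph V) (S : Set V) : Prop :=
  ∀ x ∈ S, ∀ y ∈ S, ¬ G.Adj x y

/-- The independence number `α(G)`. -/
noncomputable def alpha (G : SimpleGraph V) : ℕ :=
  sSup {n | ∃ S : Set V, IndepSet G S ∧ S.ncard = n}

/-- `S` is a maximum independent set of `G`. -/
def MaxIndep (G : SimpleGraph V) (S : Set V) : Prop :=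
  IndepSet G S ∧ S.ncard = alpha G

/-- `Ω(G)`, the family of all maximum independent sets. -/
def Omega (G : SimpleGraph V) : Set (Set V) := {S | MaxIndep G S}

/-- `core(G)`, the intersection of all maximum independent sets. -/
def core (G : SimpleGraph V) : Set V := ⋂₀ Omega G

/-- `corona(G)`, the union of all maximum independent sets. -/
def corona (G : SimpleGraph V) : Set V := ⋃₀ Omega G

/-- The matching number `μ(G)`. -/
noncomputable def matchNum (G : SimpleGraph V) : ℕ :=
  sSup {n | ∃ M : G.Subgraph, M.IsMatching ∧ M.edgeSet.ncard = n}

/-- A matching from `X` into `Y`: an injection `f` on `X` into `Y` such that each `x ∈ X`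
is adjacent to `f x` and the edges `{x, f x}` are pairwise disjoint. -/
def MatchingFrom (G : SimpleGraph V) (X Y : Set V) : Prop :=
  ∃ f : V → V, Set.InjOn f X ∧ (∀ x ∈ X, f x ∈ Y ∧ G.Adj x (f x)) ∧
    ∀ x ∈ X, ∀ y ∈ X, x ≠ y → f x ≠ y

section Aux

lemma bddAbove_indepSet [Finite V] (G : SimpleGraph V) :
    BddAbove {n | ∃ S : Set V, IndepSet G S ∧ S.ncard = n} := by
  refine ⟨Nat.card V, ?_⟩
  rintro n ⟨S, -, rfl⟩
  simpa [Set.ncard_univ] using Set.ncard_le_ncard (Set.subset_univ S) Set.finite_univ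

lemma ncard_le_alpha [Finite V] {G : SimpleGraph V} {S : Set V} (h : IndepSet G S) :
    S.ncard ≤ alpha G :=
  le_csSup (bddAbove_indepSet G) ⟨S, h, rfl⟩

lemma exists_maxIndep [Finite V] (G : SimpleGraph V) : ∃ S, MaxIndep G S := by
  have h0 : alpha G ∈ {n | ∃ S : Set V, IndepSet G S ∧ S.ncard = n} :=
    Nat.sSup_mem ⟨0, ∅, fun x hx => (Set.notMem_empty x hx).elim, by simp⟩
      (bddAbove_indepSet G)
  obtain ⟨S, h1, h2⟩ := h0
  exact ⟨S, h1, h2⟩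

lemma exists_adj_of_not_mem [Finite V] {G : SimpleGraph V} {S : Set V} (hS : MaxIndep G S)
    {v : V} (hv : v ∉ S) : ∃ w ∈ S, G.Adj v w := by
  by_contra h
  push_neg at h
  have hins : IndepSet G (insert v S) := by
    rintro x (rfl | hx) y (rfl | hy)
    · simp
    · exact h y hy
    · exact fun hadj => h x hx hadj.symm
    · exact hS.1 x hx y hy
  have hcard : (insert v S).ncard = alpha G + 1 := by
    rw [Set.ncard_insert_of_notMem hv (Set.toFinite S), hS.2]
  have := ncard_le_alpha hins
  omega

lemma indepSet_induce_iff (G : SimpleGraph V) (U : Set V) (T : Set ↥U) :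
    IndepSet (G.induce U) T ↔ IndepSet G (Subtype.val '' T) := by
  constructor
  · rintro h x ⟨a, ha, rfl⟩ y ⟨b, hb, rfl⟩ hadj
    exact h a ha b hb (by simpa using hadj)
  · intro h x hx y hy hadj
    exact h x ⟨x, hx, rfl⟩ y ⟨y, hy, rfl⟩ (by simpa using hadj)

lemma ncard_preimage_val {U S : Set V} (hSU : S ⊆ U) :
    (Subtype.val ⁻¹' S : Set ↥U).ncard = S.ncard := by
  have himg : Subtype.val '' (Subtype.val ⁻¹' S : Set ↥U) = S := by
    rw [Subtype.image_preimage_coe]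
    exact Set.inter_eq_self_of_subset_right hSU
  calc (Subtype.val ⁻¹' S : Set ↥U).ncard
      = (Subtype.val '' (Subtype.val ⁻¹' S : Set ↥U)).ncard :=
        (Set.ncard_image_of_injective _ Subtype.val_injective).symm
    _ = S.ncard := by rw [himg]

lemma alpha_induce [Finite V] (G : SimpleGraph V) {U : Set V} {S : Set V}
    (hS : MaxIndep G S) (hSU : S ⊆ U) : alpha (G.induce U) = alpha G := by
  apply le_antisymm
  · obtain ⟨T, hT, hTc⟩ := exists_maxIndep (G.induce U)
    rw [← hTc, ← Set.ncard_image_of_injective T Subtype.val_injective]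
    exact ncard_le_alpha ((indepSet_induce_iff G U T).1 hT)
  · have himg : Subtype.val '' (Subtype.val ⁻¹' S : Set ↥U) = S := by
      rw [Subtype.image_preimage_coe]
      exact Set.inter_eq_self_of_subset_right hSU
    have hind : IndepSet (G.induce U) (Subtype.val ⁻¹' S) := by
      rw [indepSet_induce_iff, himg]; exact hS.1
    calc alpha G = S.ncard := hS.2.symm
      _ = (Subtype.val ⁻¹' S : Set ↥U).ncard := (ncard_preimage_val hSU).symm
      _ ≤ alpha (G.induce U) := ncard_le_alpha hind

end Aux

theorem stmt_17 [Fintype V] (G : SimpleGraph V)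
    (hKE : alpha G + matchNum G = Fintype.card V)
    (Γ : Set (Set V)) (hΓ : Γ ⊆ Omega G) (hne : Γ.Nonempty) :
    Subtype.val '' corona (G.induce (⋃₀ Γ)) = ⋃₀ Γ ∧
      Subtype.val '' core (G.induce (⋃₀ Γ)) = ⋂₀ Γ := by
  set U : Set V := ⋃₀ Γ with hU
  obtain ⟨S0, hS0Γ⟩ := hne
  have hS0 : MaxIndep G S0 := hΓ hS0Γ
  have hS0U : S0 ⊆ U := Set.subset_sUnion_of_mem hS0Γ
  have halpha : alpha (G.induce U) = alpha G := alpha_induce G hS0 hS0U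
  -- the preimage of any `S ∈ Γ` is a maximum independent set of the induced graph
  have hpre : ∀ S ∈ Γ, (Subtype.val ⁻¹' S : Set ↥U) ∈ Omega (G.induce U) := by
    intro S hSΓ
    have hSU : S ⊆ U := Set.subset_sUnion_of_mem hSΓ
    have himg : Subtype.val '' (Subtype.val ⁻¹' S : Set ↥U) = S := by
      rw [Subtype.image_preimage_coe]
      exact Set.inter_eq_self_of_subset_right hSU
    refine ⟨?_, ?_⟩
    · rw [indepSet_induce_iff, himg]; exact (hΓ hSΓ).1
    · rw [ncard_preimage_val hSU, (hΓ hSΓ).2, halpha]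
  -- the image of any maximum independent set of the induced graph is one of `G`
  have himgOmega : ∀ T ∈ Omega (G.induce U), MaxIndep G (Subtype.val '' T) := by
    intro T hT
    refine ⟨(indepSet_induce_iff G U T).1 hT.1, ?_⟩
    rw [Set.ncard_image_of_injective T Subtype.val_injective, hT.2, halpha]
  constructor
  · apply Set.Subset.antisymm
    · rintro u ⟨t, -, rfl⟩
      exact t.2
    · intro u hu
      obtain ⟨S, hSΓ, huS⟩ := hu
      have huU : u ∈ U := Set.subset_sUnion_of_mem hSΓ huS
      exact ⟨⟨u, huU⟩, ⟨_, hpre S hSΓ, huS⟩, rfl⟩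
  · apply Set.Subset.antisymm
    · rintro u ⟨t, ht, rfl⟩
      intro S hSΓ
      exact ht _ (hpre S hSΓ)
    · intro v hv
      have hvU : v ∈ U := hS0U (hv S0 hS0Γ)
      refine ⟨⟨v, hvU⟩, ?_, rfl⟩
      intro T hT
      by_contra hvT
      have hvim : v ∉ Subtype.val '' T := by
        rintro ⟨t, htT, htv⟩
        exact hvT (by rwa [show t = ⟨v, hvU⟩ from Subtype.ext htv] at htT)
      obtain ⟨w, hwT, hadj⟩ := exists_adj_of_not_mem (himgOmega T hT) hvim
      have hwU : w ∈ U := by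
        obtain ⟨t, -, rfl⟩ := hwT; exact t.2
      obtain ⟨A, hAΓ, hwA⟩ := hwU
      exact (hΓ hAΓ).1 v (hv A hAΓ) w hwA hadj
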